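/- In BEC belief propagation, a backward message from a variable node v to a check node c is resolved at iteration ℓ+1 while the forward message m_{c→v}(ℓ) is also resolved only if v is connected to at least two check nodes that are degree-1 in the residual graph at iteration ℓ. -/
import Mathlib


variable {V C : Type*}

/-- Check-to-variable message rule: `m_{c→v}` is resolved iff all incoming variable-to-check
messages from the other neighbors of `c` are resolved. -/
def checkMsg (N : C → Set V) (x : V → C → Prop) (c : C) (v : V) : Prop :=
  ∀ v' ∈ N c, v' ≠ v → x v' c

/-- BP variable-to-check messages over the BEC with erased set `E`. -/
def bpMsg (N : C → Set V) (Nv : V → Set C) (E : Set V) : ℕ → V → C → Prop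
  | 0 => fun v _ => v ∉ E
  | ℓ + 1 => fun v c => v ∉ E ∨ ∃ c' ∈ Nv v, c' ≠ c ∧ checkMsg N (bpMsg N Nv E ℓ) c' v

/-- Residual graph at iteration `ℓ`: unresolved variable nodes of the (equivalent) parallel
peeling process. -/
def ppd (N : C → Set V) (E : Set V) : ℕ → Set V
  | 0 => E
  | ℓ + 1 => {v ∈ ppd N E ℓ | ¬ ∃ c : C, v ∈ N c ∧ N c ∩ ppd N E ℓ = {v}}

theorem ppd_subset_E (N : C → Set V) (E : Set V) :
    ∀ ℓ, ppd N E ℓ ⊆ E := by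
  intro ℓ
  induction ℓ with
  | zero => exact fun _ h => h
  | succ k ihk => exact fun w hw => ihk hw.1

theorem bpMsg_not_ppd (N : C → Set V) (Nv : V → Set C)
    (hadj : ∀ v c, c ∈ Nv v ↔ v ∈ N c) (E : Set V) :
    ∀ ℓ (v : V) (c : C), bpMsg N Nv E ℓ v c → v ∉ ppd N E ℓ := by
  intro ℓ
  induction ℓ with
  | zero => intro v c h hv; exact h hv
  | succ ℓ ih =>
    intro v c h hv
    rcases h with h | ⟨c', hc', _, hck⟩
    · exact h (ppd_subset_E N E (ℓ + 1) hv)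
    · have hsub : N c' ∩ ppd N E ℓ ⊆ {v} := by
        rintro w ⟨hw1, hw2⟩
        by_contra hne
        exact ih w c' (hck w hw1 hne) hw2
      by_cases hvp : v ∈ ppd N E ℓ
      · exact hv.2 ⟨c', (hadj v c').mp hc',
          Set.Subset.antisymm hsub (by rintro w rfl; exact ⟨(hadj _ c').mp hc', hvp⟩)⟩
      · exact hvp hv.1

/-- In BEC belief propagation, a backward message `m_{v→c}(ℓ+1)` from an erased variable node
`v` to a check node `c` is resolved while the forward message `m_{c→v}(ℓ)` is also resolved
only if `v` is connected to at least two check nodes that have residual degree `1` at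
iteration `ℓ` (i.e. whose unique erased neighbor in the residual graph at iteration `ℓ`
is `v`). -/
theorem backward_message_two_deg_one (N : C → Set V) (Nv : V → Set C)
    (hadj : ∀ v c, c ∈ Nv v ↔ v ∈ N c) (E : Set V)
    (v : V) (c : C) (ℓ : ℕ)
    (hvE : v ∈ E) (hvc : v ∈ N c)
    -- `v` is still erased (in the residual graph) at iteration `ℓ`:
    (hv : v ∈ ppd N E ℓ)
    (hfwd : checkMsg N (bpMsg N Nv E ℓ) c v)
    (hbwd : bpMsg N Nv E (ℓ + 1) v c) :
    ∃ c' ∈ Nv v, c' ≠ c ∧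
      N c ∩ ppd N E ℓ = {v} ∧ N c' ∩ ppd N E ℓ = {v} := by
  rcases hbwd with h | ⟨c', hc', hne, hck⟩
  · exact absurd hvE h
  have key : ∀ (d : C), v ∈ N d → checkMsg N (bpMsg N Nv E ℓ) d v →
      N d ∩ ppd N E ℓ = {v} := by
    intro d hvd hmsg
    apply Set.Subset.antisymm
    · rintro w ⟨hw1, hw2⟩
      by_contra hwne
      exact bpMsg_not_ppd N Nv hadj E ℓ w d (hmsg w hw1 hwne) hw2
    · rintro w rfl; exact ⟨hvd, hv⟩
  exact ⟨c', hc', hne, key c hvc hfwd, key c' ((hadj v c').mp hc') hck⟩
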